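/- For the broadcast max-consensus dynamics on a connected graph with at least two nodes, if ∑_{i∈N} (x_i(k+2) − x_i(k)) = 0 for some k, then x(k) is the constant vector c·1 with c = max of initial states. -/

import Mathlib

/-!
Each `x i` is nondecreasing, so a vanishing sum of the increments `x i (k + 2) - x i k ≥ 0` freezes
the state at times `k, k + 1, k + 2`. Freezing at `k` forces `u ≤ x` there, so every agent is
authorized at time `k + 1`; freezing at `k + 1` then says that `x (k + 1)` dominates its average over
every full neighbourhood. By the minimum principle on the connected graph, `x (k + 1)` is constant.
The constant is at least the initial maximum by monotonicity, and at most it because `max` and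
averaging preserve an upper bound `M ≥ 0` (the `0` covers agents with no authorized neighbour).
-/

open Finset
open scoped BigOperators

section Average

variable {ι α : Type*} [Field α] [LinearOrder α] [IsStrictOrderedRing α]

lemma Finset.dite_nonempty_sum_div_card_eq_expect (s : Finset ι) (f : ι → α) :
    (if _ : s.Nonempty then (∑ i ∈ s, f i) / (s.card : α) else 0) = 𝔼 i ∈ s, f i := by
  split_ifs with hs
  · exact (expect_eq_sum_div_card s f).symm
  · simp [not_nonempty_iff_eq_empty.mp hs]

lemma Finset.expect_le_of_nonneg {s : Finset ι} {f : ι → α} {a : α} (h : ∀ i ∈ s, f i ≤ a)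
    (ha : 0 ≤ a) : 𝔼 i ∈ s, f i ≤ a := by
  rcases s.eq_empty_or_nonempty with rfl | hs
  · simpa using ha
  · exact expect_le hs h

end Average

namespace SimpleGraph

variable {V : Type*} {G : SimpleGraph V}

lemma Reachable.of_adj_closed {p : V → Prop} (hp : ∀ ⦃i j⦄, G.Adj i j → p i → p j) {a b : V}
    (hab : G.Reachable a b) (ha : p a) : p b := by
  obtain ⟨w⟩ := hab
  induction w with
  | nil => exact ha
  | cons hadj _ ih => exact ih (hp hadj ha)

variable [Fintype V] [DecidableRel G.Adj] {α : Type*} [Field α] [LinearOrder α]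
  [IsStrictOrderedRing α] {f : V → α}

lemma eq_of_adj_of_forall_le_of_expect_le {i j : V} (hmin : ∀ l, f i ≤ f l)
    (hi : 𝔼 l ∈ G.neighborFinset i, f l ≤ f i) (hij : G.Adj i j) : f j = f i := by
  refine le_antisymm ?_ (hmin j)
  by_contra! hlt
  exact (lt_expect (fun l _ => hmin l) ⟨j, (G.mem_neighborFinset i j).mpr hij, hlt⟩).not_ge hi

theorem Connected.eq_of_expect_neighborFinset_le (hG : G.Connected)
    (hf : ∀ i, 𝔼 j ∈ G.neighborFinset i, f j ≤ f i) (i j : V) : f i = f j := by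
  have := hG.nonempty
  obtain ⟨m, hm⟩ := Finite.exists_min f
  have hclosed : ∀ ⦃a b⦄, G.Adj a b → f a = f m → f b = f m := fun a b hab ha =>
    (eq_of_adj_of_forall_le_of_expect_le (ha ▸ hm) (hf a) hab).trans ha
  rw [(hG m i).of_adj_closed hclosed rfl, (hG m j).of_adj_closed hclosed rfl]

end SimpleGraph

lemma monotone_of_eq_max {α : Type*} [LinearOrder α] {x v : ℕ → α}
    (hx : ∀ n, x (n + 1) = max (x n) (v n)) : Monotone x :=
  monotone_nat_of_le_succ fun n => (hx n).symm ▸ le_max_left _ _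

lemma eq_of_sum_sub_eq_zero {ι α : Type*} [Fintype ι] [AddCommGroup α] [PartialOrder α]
    [IsOrderedAddMonoid α] {x : ι → ℕ → α} (hx : ∀ i, Monotone (x i)) {k : ℕ}
    (hsum : ∑ i, (x i (k + 2) - x i k) = 0) (i : ι) : x i (k + 2) = x i k :=
  ((sum_eq_sum_iff_of_le fun j _ => hx j (by omega : k ≤ k + 2)).mp
    (by rwa [sum_sub_distrib, sub_eq_zero, eq_comm] at hsum) i (mem_univ i)).symm

lemma le_of_eq_max_expect {ι α : Type*} [Field α] [LinearOrder α] [IsStrictOrderedRing α]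
    {x : ι → ℕ → α} {s : ι → ℕ → Finset ι}
    (hx : ∀ i n, x i (n + 1) = max (x i n) (𝔼 j ∈ s i n, x j n)) {M : α}
    (hM : 0 ≤ M) {n₀ : ℕ} (h₀ : ∀ i, x i n₀ ≤ M) {n : ℕ} (hn : n₀ ≤ n) (i : ι) : x i n ≤ M := by
  induction n, hn using Nat.le_induction generalizing i with
  | base => exact h₀ i
  | succ n _ ih => exact (hx i n).symm ▸ max_le (ih i) (expect_le_of_nonneg (fun j _ => ih j) hM)

theorem stmt_11_general {ι : Type*} [Fintype ι] [Nonempty ι]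
    (G : SimpleGraph ι) [DecidableRel G.Adj]
    (hconn : G.Connected)
    (x : ι → ℕ → ℝ) (y : ι → ℕ → Bool) (u : ι → ℕ → ℝ)
    (hx1 : ∀ i, 0 ≤ x i 1)
    (hu : ∀ i k, u i k =
      if h : ((G.neighborFinset i).filter (fun j => y j k = true)).Nonempty then
        (∑ j ∈ (G.neighborFinset i).filter (fun j => y j k = true), x j k) /
          (((G.neighborFinset i).filter (fun j => y j k = true)).card : ℝ)
      else 0)
    (hxdyn : ∀ i k, x i (k + 1) = max (x i k) (u i k))
    (hydyn : ∀ i k, y i (k + 1) = decide (u i k ≤ x i k))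
    (k : ℕ) (hk : 1 ≤ k)
    (hsum : ∑ i, (x i (k + 2) - x i k) = 0) :
    ∀ i, x i k = Finset.univ.sup' Finset.univ_nonempty (fun j => x j 1) := by
  have hu' : ∀ i n, u i n = 𝔼 j ∈ (G.neighborFinset i).filter (fun j => y j n = true), x j n :=
    fun i n => (hu i n).trans (dite_nonempty_sum_div_card_eq_expect _ _)
  have hmono : ∀ i, Monotone (x i) := fun i => monotone_of_eq_max (hxdyn i)
  have hfix2 := eq_of_sum_sub_eq_zero hmono hsum
  have hfix1 : ∀ i, x i (k + 1) = x i k := fun i =>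
    le_antisymm (hfix2 i ▸ hmono i (Nat.le_succ _)) (hmono i (Nat.le_succ _))
  have hu_le : ∀ i n, x i (n + 1) = x i n → u i n ≤ x i n := fun i n h =>
    max_eq_left_iff.mp ((hxdyn i n).symm.trans h)
  have hy : ∀ j, y j (k + 1) = true := fun j => by
    rw [hydyn, decide_eq_true (hu_le j k (hfix1 j))]
  have hsuper : ∀ i, 𝔼 j ∈ G.neighborFinset i, x j (k + 1) ≤ x i (k + 1) := fun i => by
    have h := hu_le i (k + 1) ((hfix2 i).trans (hfix1 i).symm)
    rwa [hu', filter_true_of_mem fun j _ => hy j] at h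
  have hM : ∀ i, x i 1 ≤ univ.sup' univ_nonempty (fun j => x j 1) := fun i =>
    le_sup' (fun j => x j 1) (mem_univ i)
  intro i
  refine le_antisymm (le_of_eq_max_expect (fun i n => hu' i n ▸ hxdyn i n)
    ((hx1 i).trans (hM i)) hM hk i) (sup'_le _ _ fun j _ => ?_)
  calc x j 1 ≤ x j (k + 1) := hmono j (by omega)
    _ = x i (k + 1) := hconn.eq_of_expect_neighborFinset_le hsuper j i
    _ = x i k := hfix1 i

/-- Contraction property: for the broadcast max-consensus dynamics on a connected
graph with at least two nodes, if `∑_i (x_i(k+2) - x_i(k)) = 0` at some time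
`k ≥ 1`, then `x(k)` is the consensus vector `c·1` with `c` the initial maximum. -/
theorem stmt_11 {ι : Type*} [Fintype ι] [Nonempty ι] [DecidableEq ι]
    (G : SimpleGraph ι) [DecidableRel G.Adj]
    (hconn : G.Connected) (hcard : 2 ≤ Fintype.card ι)
    (x : ι → ℕ → ℝ) (y : ι → ℕ → Bool) (u : ι → ℕ → ℝ)
    (hx1 : ∀ i, 0 ≤ x i 1) (hy1 : ∀ i, y i 1 = true)
    (hu : ∀ i k, u i k =
      if h : ((G.neighborFinset i).filter (fun j => y j k = true)).Nonempty then
        (∑ j ∈ (G.neighborFinset i).filter (fun j => y j k = true), x j k) /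
          (((G.neighborFinset i).filter (fun j => y j k = true)).card : ℝ)
      else 0)
    (hxdyn : ∀ i k, x i (k + 1) = max (x i k) (u i k))
    (hydyn : ∀ i k, y i (k + 1) = decide (u i k ≤ x i k))
    (k : ℕ) (hk : 1 ≤ k)
    (hsum : ∑ i, (x i (k + 2) - x i k) = 0) :
    ∀ i, x i k = Finset.univ.sup' Finset.univ_nonempty (fun j => x j 1) :=
  stmt_11_general G hconn x y u hx1 hu hxdyn hydyn k hk hsum
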